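/- arXiv:1111.6457 — 6 statements merged into one kernel-verified Lean document; each statement's English description precedes it below -/
import Mathlib

section
/- Let g be a finite-dimensional Lie algebra over ℂ and (x, 𝔥, y) an sl₂-triple in g. Then: (i) g = range(ad y) ⊕ ker(ad x) and g = range(ad x) ⊕ ker(ad y) as direct sums of ℂ-vector spaces; (ii) ad y restricts to a linear isomorphism from range(ad x) onto range(ad y); consequently (iii) there exists a unique linear map P : g → g such that P vanishes on ker(ad x), range(P) ⊆ range(ad x), and (ad y) ∘ P equals the projection of g onto range(ad y) along ker(ad x). -/
/-!
Everything rests on `ker e ∩ range f = 0` in a finite-dimensional representation of an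
`sl₂`-triple `(h, e, f)`. The Casimir operator `C = 4fe + h² + 2h` commutes with the action, so it
suffices to show `e (f u) = 0 → f u = 0` for `u` in a joint generalised eigenspace of `C` and `h`,
say for the eigenvalues `(c, μ)`. On `ker e` the Casimir acts as `h² + 2h`; so if `f u ≠ 0`, the
`h`-stable part of `ker e` in the joint `(c, μ - 2)`-space contains a primitive vector, which forces
`μ - 2 = n ∈ ℕ` and `c = n (n + 2)`. But then `c` differs from `λ (λ + 2)` for every
`λ = μ + 2i`, so `e` is injective on all the `(c, μ + 2i)`-spaces; as these vanish for large `i`,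
we get `u = 0`. Applied to `(h, e, f)` and to `(-h, f, e)` this gives two disjointness
statements, and rank–nullity upgrades them to complements; the rest is linear algebra.
-/

open LieModule Module Module.End LinearMap

namespace Module.End

variable {K V : Type*} [Field K] [AddCommGroup V] [Module K V]

lemma mapsTo_maxGenEigenspace_of_semiconjBy {f g : End K V} {μ ν : K}
    (h : SemiconjBy f (g - μ • 1) (g - ν • 1)) :
    Set.MapsTo f (g.maxGenEigenspace μ) (g.maxGenEigenspace ν) := by
  intro v hv
  obtain ⟨k, hk⟩ := (mem_maxGenEigenspace _ _ _).mp hv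
  refine (mem_maxGenEigenspace _ _ _).mpr ⟨k, ?_⟩
  rw [← mul_apply, ← (h.pow_right k).eq, mul_apply, hk, map_zero]

lemma eq_of_apply_eq_smul_of_mem_maxGenEigenspace {f : End K V} {μ ν : K} {v : V} (hv : v ≠ 0)
    (hfv : f v = ν • v) (hmem : v ∈ f.maxGenEigenspace μ) : ν = μ := by
  by_contra hne
  have hν : v ∈ f.maxGenEigenspace ν := (mem_maxGenEigenspace _ _ _).mpr ⟨1, by simp [hfv]⟩
  exact hv (Submodule.disjoint_def.mp (f.disjoint_genEigenspace hne ⊤ ⊤) v hν hmem)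

lemma exists_maxGenEigenspace_add_mul_eq_bot [CharZero K] [FiniteDimensional K V] (f : End K V)
    (μ : K) {a : K} (ha : a ≠ 0) : ∃ k : ℕ, f.maxGenEigenspace (μ + k * a) = ⊥ := by
  by_contra! hne
  have hinj : Function.Injective fun k : ℕ => μ + k * a := fun k l hkl => by
    simpa [ha] using hkl
  refine Set.infinite_range_of_injective hinj (f.finite_hasEigenvalue.subset ?_)
  rintro _ ⟨k, rfl⟩
  exact hasEigenvalue_of_hasGenEigenvalue (k := finrank K V)
    (by rw [hasGenEigenvalue_iff, ← maxGenEigenspace_eq_genEigenspace_finrank]; exact hne k)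

end Module.End

namespace LinearMap

section Ring

variable {R M N : Type*} [Ring R] [AddCommGroup M] [Module R M] [AddCommGroup N] [Module R N]

theorem ker_le_ker_of_iSupIndep {ι : Type*} {p : ι → Submodule R M} (hind : iSupIndep p)
    (htop : ⨆ i, p i = ⊤) {A : M →ₗ[R] M} {B : M →ₗ[R] N} (hA : ∀ i, Set.MapsTo A (p i) (p i))
    (h : ∀ i, ∀ u ∈ p i, A u = 0 → B u = 0) : ker A ≤ ker B := by
  intro u hu
  obtain ⟨c, hc, rfl⟩ :=
    (Submodule.mem_iSup_iff_exists_finsupp p u).mp (htop ▸ Submodule.mem_top)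
  rw [mem_ker, Finsupp.sum, map_sum] at hu ⊢
  have hAc := (iSupIndep_iff_finsetSum_eq_zero_imp_eq_zero p).mp hind c.support
    (fun i => A (c i)) (fun i _ => hA i (hc i)) hu
  exact Finset.sum_eq_zero fun i hi => h i _ (hc i) (hAc i hi)

theorem bijOn_of_isCompl_ker (B : M →ₗ[R] N) {p : Submodule R M} (h : IsCompl p (ker B)) :
    Set.BijOn B p (range B) := by
  refine ⟨fun u _ => mem_range_self B u, injOn_of_disjoint_ker le_rfl h.disjoint, ?_⟩
  rintro _ ⟨v, rfl⟩
  obtain ⟨a, ha, k, hk, rfl⟩ :=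
    Submodule.mem_sup.mp (h.sup_eq_top ▸ Submodule.mem_top (x := v))
  exact ⟨a, ha, by simp [mem_ker.mp hk]⟩

theorem existsUnique_lift_projection_of_isCompl (B : M →ₗ[R] M) {p q : Submodule R M}
    (hp : IsCompl p (ker B)) (hq : IsCompl (range B) q) :
    ∃! P : M →ₗ[R] M, (∀ u ∈ q, P u = 0) ∧ range P ≤ p ∧ ∀ u, u - B (P u) ∈ q := by
  let e : p ≃ₗ[R] range B :=
    (Submodule.quotientEquivOfIsCompl (ker B) p hp.symm).symm ≪≫ₗ B.quotKerEquivRange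
  have hBe : ∀ w : range B, B (e.symm w) = w := fun w =>
    congrArg Subtype.val (e.apply_symm_apply w)
  let P : M →ₗ[R] M := p.subtype ∘ₗ e.symm ∘ₗ (range B).projectionOnto q hq
  have hPp : ∀ u, P u ∈ p := fun u => (e.symm _).2
  have hPq : ∀ u, u - B (P u) ∈ q := fun u => by
    simpa [P, hBe] using Submodule.sub_projection_mem hq u
  refine ⟨P, ⟨fun u hu => ?_, ?_, hPq⟩, ?_⟩
  · simp [P, (Submodule.projectionOnto_apply_eq_zero_iff hq).mpr hu]
  · rintro _ ⟨u, rfl⟩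
    exact hPp u
  · rintro Q ⟨-, hQp, hQq⟩
    ext u
    have hB : B (Q u - P u) = 0 := by
      refine Submodule.disjoint_def.mp hq.disjoint _ (mem_range_self B _) ?_
      simpa [map_sub] using sub_mem (hPq u) (hQq u)
    exact sub_eq_zero.mp <| Submodule.disjoint_def.mp hp.disjoint _
      (sub_mem (hQp (mem_range_self Q u)) (hPp u)) hB

end Ring

variable {K V W : Type*} [Field K] [AddCommGroup V] [Module K V] [AddCommGroup W] [Module K W]

theorem isCompl_range_ker_of_disjoint [FiniteDimensional K V] [FiniteDimensional K W]
    {A : V →ₗ[K] W} {B : W →ₗ[K] V}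
    (h₁ : Disjoint (range A) (ker B)) (h₂ : Disjoint (range B) (ker A)) :
    IsCompl (range A) (ker B) := by
  refine (Submodule.isCompl_iff_disjoint _ _ ?_).mpr h₁
  have := Submodule.finrank_add_finrank_le_of_disjoint h₂
  have := A.finrank_range_add_finrank_ker
  have := B.finrank_range_add_finrank_ker
  omega

end LinearMap

namespace IsSl2Triple

section CommRing

variable {R L M : Type*} [CommRing R] [LieRing L] [LieAlgebra R L]
  [AddCommGroup M] [Module R M] [LieRingModule L M] [LieModule R L M] {h e f : L}

variable (R M) in
/-- Twice the Casimir element `ef + fe + h²/2`, rewritten with `ef = fe + h`. -/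
def casimir (h e f : L) : Module.End R M :=
  (4 : R) • (toEnd R L M f * toEnd R L M e) + toEnd R L M h * toEnd R L M h +
    (2 : R) • toEnd R L M h

lemma casimir_apply (m : M) :
    casimir R M h e f m = (4 : R) • ⁅f, ⁅e, m⁆⁆ + ⁅h, ⁅h, m⁆⁆ + (2 : R) • ⁅h, m⁆ := rfl

lemma lie_h_lie_e (t : IsSl2Triple h e f) (m : M) :
    ⁅h, ⁅e, m⁆⁆ = ⁅e, ⁅h, m⁆⁆ + (2 : R) • ⁅e, m⁆ := by
  rw [leibniz_lie, t.lie_h_e_smul R, smul_lie, add_comm]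

lemma lie_h_lie_f (t : IsSl2Triple h e f) (m : M) :
    ⁅h, ⁅f, m⁆⁆ = ⁅f, ⁅h, m⁆⁆ - (2 : R) • ⁅f, m⁆ := by
  rw [leibniz_lie, t.lie_lie_smul_f R, neg_lie, smul_lie, add_comm, sub_eq_add_neg]

lemma lie_e_lie_f (t : IsSl2Triple h e f) (m : M) :
    ⁅e, ⁅f, m⁆⁆ = ⁅f, ⁅e, m⁆⁆ + ⁅h, m⁆ := by
  rw [leibniz_lie, t.lie_e_f, add_comm]

lemma commute_casimir_toEnd_e (t : IsSl2Triple h e f) :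
    Commute (casimir R M h e f) (toEnd R L M e) := by
  ext m
  simp only [mul_apply, toEnd_apply_apply, casimir_apply, lie_add, lie_smul,
    t.lie_h_lie_e (R := R), t.lie_e_lie_f]
  module

lemma commute_casimir_toEnd_f (t : IsSl2Triple h e f) :
    Commute (casimir R M h e f) (toEnd R L M f) := by
  ext m
  simp only [mul_apply, toEnd_apply_apply, casimir_apply, lie_add, lie_smul, lie_sub,
    t.lie_e_lie_f, t.lie_h_lie_f (R := R)]
  module

lemma commute_casimir_toEnd_h (t : IsSl2Triple h e f) :
    Commute (casimir R M h e f) (toEnd R L M h) := by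
  ext m
  simp only [mul_apply, toEnd_apply_apply, casimir_apply, lie_add, lie_smul,
    t.lie_h_lie_e (R := R), t.lie_h_lie_f (R := R)]
  module

lemma commute_toEnd_h_toEnd_e_mul_toEnd_f (t : IsSl2Triple h e f) :
    Commute (toEnd R L M h) (toEnd R L M e * toEnd R L M f) := by
  ext m
  simp only [mul_apply, toEnd_apply_apply, t.lie_h_lie_e (R := R), t.lie_h_lie_f (R := R),
    lie_sub, lie_smul]
  module

end CommRing

section Field

variable {K L M : Type*} [Field K] [LieRing L] [LieAlgebra K L]
  [AddCommGroup M] [Module K M] [LieRingModule L M] [LieModule K L M] {h e f : L}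

local notation "C" => casimir K M h e f
local notation "E" => toEnd K L M e
local notation "F" => toEnd K L M f
local notation "H" => toEnd K L M h

lemma mapsTo_toEnd_e_maxGenEigenspace (t : IsSl2Triple h e f) (μ : K) :
    Set.MapsTo E (maxGenEigenspace H μ) (maxGenEigenspace H (μ + 2)) := by
  refine mapsTo_maxGenEigenspace_of_semiconjBy (LinearMap.ext fun m => ?_)
  simp only [mul_apply, LinearMap.sub_apply, LinearMap.smul_apply, one_apply, toEnd_apply_apply,
    lie_sub, lie_smul, t.lie_h_lie_e (R := K)]
  module

lemma mapsTo_toEnd_f_maxGenEigenspace (t : IsSl2Triple h e f) (μ : K) :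
    Set.MapsTo F (maxGenEigenspace H μ) (maxGenEigenspace H (μ - 2)) := by
  refine mapsTo_maxGenEigenspace_of_semiconjBy (LinearMap.ext fun m => ?_)
  simp only [mul_apply, LinearMap.sub_apply, LinearMap.smul_apply, one_apply, toEnd_apply_apply,
    lie_sub, lie_smul, t.lie_h_lie_f (R := K)]
  module

lemma HasPrimitiveVectorWith.casimir_apply {t : IsSl2Triple h e f} {v : M} {μ : K}
    (P : t.HasPrimitiveVectorWith v μ) : C v = (μ * (μ + 2)) • v := by
  rw [IsSl2Triple.casimir_apply, P.lie_e, P.lie_h, lie_zero, lie_smul, P.lie_h]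
  module

variable [IsAlgClosed K] [FiniteDimensional K M]

lemma exists_hasPrimitiveVectorWith_mem_maxGenEigenspace (t : IsSl2Triple h e f) {c μ : K}
    {w : M} (hw : w ≠ 0) (hwE : ⁅e, w⁆ = 0) (hwC : w ∈ maxGenEigenspace C c)
    (hwH : w ∈ maxGenEigenspace H μ) :
    ∃ v, t.HasPrimitiveVectorWith v μ ∧ v ∈ maxGenEigenspace C c := by
  let S := ker E ⊓ maxGenEigenspace C c ⊓ maxGenEigenspace H μ
  have hS : ∀ v ∈ S, H v ∈ S := by
    rintro v ⟨⟨hvE, hvC⟩, hvH⟩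
    refine ⟨⟨?_, mapsTo_maxGenEigenspace_of_comm (commute_casimir_toEnd_h t) c hvC⟩,
      mapsTo_maxGenEigenspace_of_comm (Commute.refl H) μ hvH⟩
    rw [SetLike.mem_coe, mem_ker, toEnd_apply_apply] at hvE ⊢
    simpa [hvE] using (t.lie_h_lie_e (R := K) v).symm
  have : Nontrivial S := Submodule.nontrivial_iff_ne_bot.mpr fun hbot =>
    hw <| (Submodule.mem_bot K).mp <| hbot ▸ ⟨⟨hwE, hwC⟩, hwH⟩
  obtain ⟨ν, hν⟩ := exists_eigenvalue (LinearMap.restrict H hS)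
  obtain ⟨⟨v, ⟨hvE, hvC⟩, hvH⟩, hv⟩ := hν.exists_hasEigenvector
  have hv0 : v ≠ 0 := fun h0 => hv.2 (Subtype.ext h0)
  have hHv : ⁅h, v⁆ = ν • v := congrArg Subtype.val hv.apply_eq_smul
  obtain rfl := eq_of_apply_eq_smul_of_mem_maxGenEigenspace hv0 hHv hvH
  exact ⟨v, ⟨hv0, hHv, hvE⟩, hvC⟩

variable [CharZero K]

lemma eq_mul_add_two_and_exists_nat_of_mem_ker (t : IsSl2Triple h e f) {c μ : K}
    {w : M} (hw : w ≠ 0) (hwE : ⁅e, w⁆ = 0) (hwC : w ∈ maxGenEigenspace C c)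
    (hwH : w ∈ maxGenEigenspace H μ) : c = μ * (μ + 2) ∧ ∃ n : ℕ, μ = n := by
  obtain ⟨v, P, hvC⟩ := t.exists_hasPrimitiveVectorWith_mem_maxGenEigenspace hw hwE hwC hwH
  exact ⟨(eq_of_apply_eq_smul_of_mem_maxGenEigenspace P.ne_zero P.casimir_apply hvC).symm,
    P.exists_nat⟩

lemma eq_zero_of_mem_maxGenEigenspace (t : IsSl2Triple h e f) {c μ : K}
    (hc : ∀ i : ℕ, c ≠ (μ + 2 * i) * (μ + 2 * i + 2)) {v : M} (hvC : v ∈ maxGenEigenspace C c)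
    (hvH : v ∈ maxGenEigenspace H μ) : v = 0 := by
  obtain ⟨k, hk⟩ := exists_maxGenEigenspace_add_mul_eq_bot H μ (two_ne_zero (α := K))
  induction k generalizing μ v with
  | zero =>
    rw [Nat.cast_zero, zero_mul, add_zero] at hk
    simpa [hk] using hvH
  | succ k ih =>
    have hEv : ⁅e, v⁆ = 0 :=
      ih (fun i => by convert hc (i + 1) using 2 <;> push_cast <;> ring)
        (mapsTo_maxGenEigenspace_of_comm (commute_casimir_toEnd_e t) c hvC)
        (t.mapsTo_toEnd_e_maxGenEigenspace μ hvH) (by convert hk using 2; push_cast; ring)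
    by_contra hv
    exact hc 0 (by simpa using (t.eq_mul_add_two_and_exists_nat_of_mem_ker hv hEv hvC hvH).1)

lemma toEnd_f_eq_zero_of_mem_maxGenEigenspace (t : IsSl2Triple h e f) {c μ : K} {u : M}
    (huC : u ∈ maxGenEigenspace C c) (huH : u ∈ maxGenEigenspace H μ) (hu : ⁅e, ⁅f, u⁆⁆ = 0) :
    ⁅f, u⁆ = 0 := by
  by_contra hw
  obtain ⟨hc, n, hn⟩ := t.eq_mul_add_two_and_exists_nat_of_mem_ker hw hu
    (mapsTo_maxGenEigenspace_of_comm (commute_casimir_toEnd_f t) c huC)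
    (t.mapsTo_toEnd_f_maxGenEigenspace μ huH)
  refine hw ?_
  rw [t.eq_zero_of_mem_maxGenEigenspace (fun i hi => ?_) huC huH, lie_zero]
  obtain rfl : μ = n + 2 := by rw [← hn]; ring
  have hlt : n * (n + 2) < (n + 2 + 2 * i) * (n + 2 + 2 * i + 2) := by nlinarith
  have hcast : ((n * (n + 2) : ℕ) : K) = ((n + 2 + 2 * i) * (n + 2 + 2 * i + 2) : ℕ) := by
    push_cast
    rw [← hi, hc]
    ring
  exact hlt.ne (Nat.cast_injective hcast)

theorem disjoint_range_toEnd_f_ker_toEnd_e (t : IsSl2Triple h e f) :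
    Disjoint (range F) (ker E) := by
  let ops : Fin 2 → End K M := ![C, H]
  have hcomm : ∀ i j, Commute (ops i) (ops j) := by
    intro i j
    fin_cases i <;> fin_cases j
    exacts [Commute.refl _, commute_casimir_toEnd_h t, (commute_casimir_toEnd_h t).symm,
      Commute.refl _]
  have hEF : ∀ i, Commute (ops i) (E * F) := by
    intro i
    fin_cases i
    exacts [(commute_casimir_toEnd_e t).mul_right (commute_casimir_toEnd_f t),
      t.commute_toEnd_h_toEnd_e_mul_toEnd_f]
  have hker : ker (E * F) ≤ ker F := by
    refine ker_le_ker_of_iSupIndep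
      (independent_iInf_maxGenEigenspace_of_forall_mapsTo ops
        fun i j φ => mapsTo_maxGenEigenspace_of_comm (hcomm j i) φ)
      (iSup_iInf_maxGenEigenspace_eq_top_of_iSup_maxGenEigenspace_eq_top_of_commute ops
        (fun i j _ => hcomm i j) fun i => iSup_maxGenEigenspace_eq_top _)
      (fun χ u hu => ?_) (fun χ u hu => ?_)
    · simp only [SetLike.mem_coe, Submodule.mem_iInf] at hu ⊢
      exact fun i => mapsTo_maxGenEigenspace_of_comm (hEF i) (χ i) (hu i)
    · rw [Submodule.mem_iInf] at hu
      exact t.toEnd_f_eq_zero_of_mem_maxGenEigenspace (hu 0) (hu 1)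
  refine Submodule.disjoint_def.mpr ?_
  rintro _ ⟨u, rfl⟩ hu
  exact hker hu

end Field

end IsSl2Triple

/-- Let `g` be a finite-dimensional Lie algebra over `ℂ` and `(x, H, y)`
an `sl₂`-triple in `g`. Then: (i) `g = range (ad y) ⊕ ker (ad x)` and
`g = range (ad x) ⊕ ker (ad y)` as `ℂ`-vector spaces; (ii) `ad y` restricts to a linear
bijection from `range (ad x)` onto `range (ad y)`; and (iii) there is a unique linear map
`P : g → g` vanishing on `ker (ad x)`, with range contained in `range (ad x)`, such that
`(ad y) ∘ P` is the projection of `g` onto `range (ad y)` along `ker (ad x)`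
(i.e. `u - ⁅y, P u⁆ ∈ ker (ad x)` for every `u`, while `⁅y, P u⁆ ∈ range (ad y)`). -/
theorem sl2_decomposition_and_canonical_splitting
    {g : Type*} [LieRing g] [LieAlgebra ℂ g] [FiniteDimensional ℂ g]
    (x H y : g)
    (hHx : ⁅H, x⁆ = (2 : ℂ) • x) (hHy : ⁅H, y⁆ = (-2 : ℂ) • y) (hxy : ⁅x, y⁆ = H) :
    IsCompl (LinearMap.range (LieAlgebra.ad ℂ g y)) (LinearMap.ker (LieAlgebra.ad ℂ g x)) ∧
    IsCompl (LinearMap.range (LieAlgebra.ad ℂ g x)) (LinearMap.ker (LieAlgebra.ad ℂ g y)) ∧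
    Set.BijOn (fun u => ⁅y, u⁆)
      ((LinearMap.range (LieAlgebra.ad ℂ g x) : Submodule ℂ g) : Set g)
      ((LinearMap.range (LieAlgebra.ad ℂ g y) : Submodule ℂ g) : Set g) ∧
    (∃! P : g →ₗ[ℂ] g,
      (∀ u : g, ⁅x, u⁆ = 0 → P u = 0) ∧
      LinearMap.range P ≤ LinearMap.range (LieAlgebra.ad ℂ g x) ∧
      ∀ u : g, ⁅x, u - ⁅y, P u⁆⁆ = 0) := by
  have hdisj : Disjoint (range (LieAlgebra.ad ℂ g y)) (ker (LieAlgebra.ad ℂ g x)) ∧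
      Disjoint (range (LieAlgebra.ad ℂ g x)) (ker (LieAlgebra.ad ℂ g y)) := by
    by_cases hH : H = 0
    · obtain rfl : x = 0 := by simpa [hH, eq_comm (a := (0 : g))] using hHx
      obtain rfl : y = 0 := by simpa [hH, eq_comm (a := (0 : g))] using hHy
      simp
    · have t : IsSl2Triple H x y :=
        ⟨hH, hxy, by rw [hHx, two_smul, two_nsmul], by rw [hHy, neg_smul, two_smul, two_nsmul]⟩
      exact ⟨t.disjoint_range_toEnd_f_ker_toEnd_e, t.symm.disjoint_range_toEnd_f_ker_toEnd_e⟩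
  have hcompl_yx := isCompl_range_ker_of_disjoint hdisj.1 hdisj.2
  have hcompl_xy := isCompl_range_ker_of_disjoint hdisj.2 hdisj.1
  refine ⟨hcompl_yx, hcompl_xy, bijOn_of_isCompl_ker _ hcompl_xy, ?_⟩
  simpa only [mem_ker, LieAlgebra.ad_apply] using
    existsUnique_lift_projection_of_isCompl (LieAlgebra.ad ℂ g y) hcompl_xy hcompl_yx
end

section
/- Let g be a finite-dimensional simple Lie algebra over ℂ, (x, 𝔥, y) a principal sl₂-triple, and P the canonical splitting of ad y. Then for every h ∈ z(x) and every u ∈ g with ⁅y + h, u⁆ = 0, the element u + P(⁅h, u⁆) lies in z(y), i.e. ⁅y, u + P(⁅h, u⁆)⁆ = 0. In other words, the map u ↦ u + P(⁅h, u⁆) carries the centralizer of y + h into the centralizer of y. -/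
/-!
Regularity of `x` and `y` gives `dim z(x) + dim [y, g] = dim g`, and the splitting `P` gives
`g = z(x) + [y, g]`; so the sum is direct and `ad y ∘ P` is the identity on `[y, g]`.
If `⁅y + h, u⁆ = 0` then `⁅h, u⁆ = -⁅y, u⁆` lies in `[y, g]`, so `⁅y, P ⁅h, u⁆⁆ = ⁅h, u⁆`
cancels `⁅y, u⁆`.
-/

open Module

namespace Submodule

variable {K V : Type*} [DivisionRing K] [AddCommGroup V] [Module K V] [FiniteDimensional K V]

theorem disjoint_of_sup_eq_top_of_finrank_add_le {s t : Submodule K V} (hsup : s ⊔ t = ⊤)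
    (hdim : finrank K s + finrank K t ≤ finrank K V) : Disjoint s t := by
  have hsum := finrank_sup_add_finrank_inf_eq s t
  rw [hsup, finrank_top] at hsum
  have hinf : finrank K ↥(s ⊓ t) = 0 := by omega
  exact disjoint_iff.mpr (finrank_eq_zero.mp hinf)

end Submodule

namespace LinearMap

variable {K V W : Type*} [DivisionRing K] [AddCommGroup V] [Module K V] [AddCommGroup W]
  [Module K W]

theorem ker_sup_range_eq_top_of_forall_apply_sub_eq_zero (f : V →ₗ[K] W) (g : V →ₗ[K] V)
    (P : V → V) (hP : ∀ v, f (v - g (P v)) = 0) : ker f ⊔ range g = ⊤ :=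
  Submodule.eq_top_iff'.mpr fun v ↦ by
    simpa using Submodule.add_mem_sup (mem_ker.mpr (hP v)) (mem_range_self g (P v))

variable [FiniteDimensional K V]

theorem disjoint_ker_range_of_finrank_ker_eq {f : V →ₗ[K] W} {g : V →ₗ[K] V}
    (hfg : finrank K (ker f) = finrank K (ker g)) (hsup : ker f ⊔ range g = ⊤) :
    Disjoint (ker f) (range g) :=
  Submodule.disjoint_of_sup_eq_top_of_finrank_add_le hsup <| by
    rw [hfg, add_comm, finrank_range_add_finrank_ker]

theorem apply_apply_eq_of_mem_range {f : V →ₗ[K] W} {g : V →ₗ[K] V} (P : V → V)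
    (hfg : finrank K (ker f) = finrank K (ker g)) (hP : ∀ v, f (v - g (P v)) = 0) {v : V}
    (hv : v ∈ range g) : g (P v) = v := by
  have hdisj := disjoint_ker_range_of_finrank_ker_eq hfg
    (ker_sup_range_eq_top_of_forall_apply_sub_eq_zero f g P hP)
  have hzero : v - g (P v) = 0 :=
    Submodule.disjoint_def.mp hdisj _ (mem_ker.mpr (hP v)) (sub_mem hv (mem_range_self g (P v)))
  exact (sub_eq_zero.mp hzero).symm

end LinearMap

theorem centralizer_slice_maps_to_centralizer_y_general
    {g : Type*} [LieRing g] [LieAlgebra ℂ g] [FiniteDimensional ℂ g]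
    (x y : g)
    (hregx : Module.finrank ℂ (LinearMap.ker (LieAlgebra.ad ℂ g x)) = LieAlgebra.rank ℂ g)
    (hregy : Module.finrank ℂ (LinearMap.ker (LieAlgebra.ad ℂ g y)) = LieAlgebra.rank ℂ g)
    (P : g →ₗ[ℂ] g)
    (hP2 : ∀ u : g, ⁅x, u - ⁅y, P u⁆⁆ = 0)
    (h : g)
    (u : g) (hu : ⁅y + h, u⁆ = 0) :
    ⁅y, u + P ⁅h, u⁆⁆ = 0 := by
  have hyu : ⁅y, u⁆ = -⁅h, u⁆ := eq_neg_of_add_eq_zero_left (by rwa [← add_lie])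
  have hmem : ⁅h, u⁆ ∈ LinearMap.range (LieAlgebra.ad ℂ g y) := ⟨-u, by simp [hyu]⟩
  have hsplit : ⁅y, P ⁅h, u⁆⁆ = ⁅h, u⁆ :=
    LinearMap.apply_apply_eq_of_mem_range (f := LieAlgebra.ad ℂ g x) P (hregx.trans hregy.symm)
      hP2 hmem
  rw [lie_add, hyu, hsplit, neg_add_cancel]

/-- Let `g` be a finite-dimensional simple Lie algebra over `ℂ`,
`(x, H, y)` a principal `sl₂`-triple, and `P` the canonical splitting of `ad y`.
Then for every `h ∈ z(x)` and every `u ∈ g` with `⁅y + h, u⁆ = 0`, the element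
`u + P ⁅h, u⁆` lies in the centralizer of `y`: `⁅y, u + P ⁅h, u⁆⁆ = 0`. -/
theorem centralizer_slice_maps_to_centralizer_y
    {g : Type*} [LieRing g] [LieAlgebra ℂ g] [FiniteDimensional ℂ g]
    [LieAlgebra.IsSimple ℂ g]
    (x H y : g)
    (hHx : ⁅H, x⁆ = (2 : ℂ) • x) (hHy : ⁅H, y⁆ = (-2 : ℂ) • y) (hxy : ⁅x, y⁆ = H)
    (hregx : Module.finrank ℂ (LinearMap.ker (LieAlgebra.ad ℂ g x)) = LieAlgebra.rank ℂ g)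
    (hregy : Module.finrank ℂ (LinearMap.ker (LieAlgebra.ad ℂ g y)) = LieAlgebra.rank ℂ g)
    (P : g →ₗ[ℂ] g)
    (hP0 : ∀ u : g, ⁅x, u⁆ = 0 → P u = 0)
    (hP1 : LinearMap.range P ≤ LinearMap.range (LieAlgebra.ad ℂ g x))
    (hP2 : ∀ u : g, ⁅x, u - ⁅y, P u⁆⁆ = 0)
    (h : g) (hh : ⁅x, h⁆ = 0)
    (u : g) (hu : ⁅y + h, u⁆ = 0) :
    ⁅y, u + P ⁅h, u⁆⁆ = 0 :=
  centralizer_slice_maps_to_centralizer_y_general x y hregx hregy P hP2 h u hu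
end

section
/- Let g be a finite-dimensional simple Lie algebra over ℂ, (x, 𝔥, y) a principal sl₂-triple, P the canonical splitting of ad y, and κ the Killing form of g. Then for all w, h ∈ z(x), all v ∈ g, and every integer k ≥ 1, one has κ(w, (P ∘ ad h)^k (v)) = 0. In particular, the range of P is orthogonal to z(x) with respect to the Killing form. -/
/-- Let `g` be a finite-dimensional simple Lie algebra over `ℂ`,
`(x, H, y)` a principal `sl₂`-triple, `P` the canonical splitting of `ad y`, and `κ`
the Killing form of `g`. Then for all `w, h ∈ z(x)`, all `v ∈ g` and all `k ≥ 1`,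
`κ(w, (P ∘ ad h)^k v) = 0`. In particular, the range of `P` is orthogonal to `z(x)`
with respect to the Killing form. -/
theorem killing_orthogonality_of_splitting
    {g : Type*} [LieRing g] [LieAlgebra ℂ g] [FiniteDimensional ℂ g]
    [LieAlgebra.IsSimple ℂ g]
    (x H y : g)
    (hHx : ⁅H, x⁆ = (2 : ℂ) • x) (hHy : ⁅H, y⁆ = (-2 : ℂ) • y) (hxy : ⁅x, y⁆ = H)
    (hregx : Module.finrank ℂ (LinearMap.ker (LieAlgebra.ad ℂ g x)) = LieAlgebra.rank ℂ g)
    (hregy : Module.finrank ℂ (LinearMap.ker (LieAlgebra.ad ℂ g y)) = LieAlgebra.rank ℂ g)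
    (P : g →ₗ[ℂ] g)
    (hP0 : ∀ u : g, ⁅x, u⁆ = 0 → P u = 0)
    (hP1 : LinearMap.range P ≤ LinearMap.range (LieAlgebra.ad ℂ g x))
    (hP2 : ∀ u : g, ⁅x, u - ⁅y, P u⁆⁆ = 0) :
    (∀ w h : g, ⁅x, w⁆ = 0 → ⁅x, h⁆ = 0 → ∀ v : g, ∀ k : ℕ, 1 ≤ k →
      killingForm ℂ g w (((P ∘ₗ LieAlgebra.ad ℂ g h : Module.End ℂ g) ^ k) v) = 0) ∧
    (∀ w : g, ⁅x, w⁆ = 0 → ∀ u : g, killingForm ℂ g w (P u) = 0) := by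
  have key : ∀ w : g, ⁅x, w⁆ = 0 → ∀ u : g, killingForm ℂ g w (P u) = 0 := by
    intro w hw u
    obtain ⟨s, hs⟩ := hP1 (LinearMap.mem_range_self P u)
    have hs' : ⁅x, s⁆ = P u := hs
    rw [← hs', ← LieModule.traceForm_apply_lie_apply]
    rw [← lie_skew, hw, neg_zero, map_zero, LinearMap.zero_apply]
  refine ⟨?_, key⟩
  intro w h hw hh v k hk
  obtain ⟨n, rfl⟩ := Nat.exists_eq_add_of_le hk
  have heq : (((P ∘ₗ LieAlgebra.ad ℂ g h : Module.End ℂ g) ^ (1 + n)) v) =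
      P (⁅h, ((P ∘ₗ LieAlgebra.ad ℂ g h : Module.End ℂ g) ^ n) v⁆) := by
    rw [pow_add, pow_one]; rfl
  rw [heq]
  exact key w hw _
end

section
/- Let g be a finite-dimensional simple Lie algebra over ℂ, (x, 𝔥, y) a principal sl₂-triple, P the canonical splitting of ad y, and κ the Killing form. For h ∈ z(x), define Γ_h : z(y) → g by Γ_h(v) = Σ_{k=0}^{n} (-1)^k (P ∘ ad h)^k (v), where n = dim_ℂ g. Then the trivialization Γ preserves the canonical symplectic pairing: for every h ∈ z(x), all ξ', η' ∈ z(x) and all ξ'', η'' ∈ z(y), κ(ξ', Γ_h(η'')) − κ(Γ_h(ξ''), η') = κ(ξ', η'') − κ(ξ'', η'). -/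
/-!
Every summand of `Γ_h v` with `k ≥ 1` lies in `range P ⊆ range (ad x)`, and the Killing form
pairs `range (ad x)` trivially with `z(x)` by invariance: `κ(ξ, ⁅x, u⁆) = κ(⁅ξ, x⁆, u) = 0`.
Hence `κ(ξ, Γ_h v) = κ(ξ, v)` for all `ξ ∈ z(x)`, and both sides of the identity agree termwise.
-/

open LieAlgebra

lemma LieModule.traceForm_lie_eq_zero_of_lie_eq_zero {R L M : Type*} [CommRing R] [LieRing L]
    [LieAlgebra R L] [AddCommGroup M] [Module R M] [LieRingModule L M] [LieModule R L M]
    {x ξ : L} (hξ : ⁅x, ξ⁆ = 0) (u : L) : traceForm R L M ξ ⁅x, u⁆ = 0 := by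
  rw [← traceForm_apply_lie_apply, ← lie_skew, hξ, neg_zero, map_zero, LinearMap.zero_apply]

lemma LinearMap.BilinForm.apply_sum_range_smul_pow_eq {R M : Type*} [CommSemiring R]
    [AddCommMonoid M] [Module R M] (B : LinearMap.BilinForm R M) {T : Module.End R M} {ξ : M}
    (hT : ∀ w, B ξ (T w) = 0) (n : ℕ) (c : ℕ → R) (v : M) :
    B ξ (∑ k ∈ Finset.range (n + 1), c k • (T ^ k) v) = c 0 * B ξ v := by
  simp [Finset.sum_range_succ', pow_succ', hT]

lemma killingForm_apply_eq_zero_of_range_le_range_ad {R L : Type*} [CommRing R] [LieRing L]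
    [LieAlgebra R L] {x ξ : L} {P : L →ₗ[R] L} (hP : LinearMap.range P ≤ (ad R L x).range)
    (hξ : ⁅x, ξ⁆ = 0) (w : L) : killingForm R L ξ (P w) = 0 := by
  obtain ⟨u, hu⟩ := hP ⟨w, rfl⟩
  rw [← hu]
  exact LieModule.traceForm_lie_eq_zero_of_lie_eq_zero hξ u

theorem gamma_preserves_canonical_symplectic_form_general
    {g : Type*} [LieRing g] [LieAlgebra ℂ g]
    (x : g)
    (P : g →ₗ[ℂ] g)
    (hP1 : LinearMap.range P ≤ LinearMap.range (LieAlgebra.ad ℂ g x))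
    (Γ : g → g → g)
    (hΓ : ∀ h v : g, Γ h v = ∑ k ∈ Finset.range (Module.finrank ℂ g + 1),
      ((-1 : ℂ) ^ k) • (((P ∘ₗ LieAlgebra.ad ℂ g h : Module.End ℂ g) ^ k) v))
    (h : g)
    (ξ' η' : g) (hξ' : ⁅x, ξ'⁆ = 0) (hη' : ⁅x, η'⁆ = 0)
    (ξ'' η'' : g) :
    killingForm ℂ g ξ' (Γ h η'') - killingForm ℂ g (Γ h ξ'') η' =
      killingForm ℂ g ξ' η'' - killingForm ℂ g ξ'' η' := by
  have hΓ_pair : ∀ ξ, ⁅x, ξ⁆ = 0 → ∀ v, killingForm ℂ g ξ (Γ h v) = killingForm ℂ g ξ v := by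
    intro ξ hξ v
    rw [hΓ, LinearMap.BilinForm.apply_sum_range_smul_pow_eq _
      (fun w ↦ killingForm_apply_eq_zero_of_range_le_range_ad hP1 hξ (ad ℂ g h w)) _
      (fun k ↦ (-1 : ℂ) ^ k), pow_zero, one_mul]
  rw [hΓ_pair ξ' hξ', LieModule.traceForm_comm _ _ _ (Γ h ξ''), hΓ_pair η' hη',
    LieModule.traceForm_comm _ _ _ η']

/-- Let `g` be a finite-dimensional simple Lie algebra over `ℂ`,
`(x, H, y)` a principal `sl₂`-triple, `P` the canonical splitting of `ad y`, and `κ`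
the Killing form. For `h ∈ z(x)` define `Γ_h(v) = ∑_{k=0}^{n} (-1)^k (P ∘ ad h)^k v`,
`n = dim_ℂ g`. Then the trivialization `Γ` preserves the canonical symplectic pairing:
for every `h ∈ z(x)`, all `ξ', η' ∈ z(x)` and all `ξ'', η'' ∈ z(y)`,
`κ(ξ', Γ_h(η'')) − κ(Γ_h(ξ''), η') = κ(ξ', η'') − κ(ξ'', η')`. -/
theorem gamma_preserves_canonical_symplectic_form
    {g : Type*} [LieRing g] [LieAlgebra ℂ g] [FiniteDimensional ℂ g]
    [LieAlgebra.IsSimple ℂ g]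
    (x H y : g)
    (hHx : ⁅H, x⁆ = (2 : ℂ) • x) (hHy : ⁅H, y⁆ = (-2 : ℂ) • y) (hxy : ⁅x, y⁆ = H)
    (hregx : Module.finrank ℂ (LinearMap.ker (LieAlgebra.ad ℂ g x)) = LieAlgebra.rank ℂ g)
    (hregy : Module.finrank ℂ (LinearMap.ker (LieAlgebra.ad ℂ g y)) = LieAlgebra.rank ℂ g)
    (P : g →ₗ[ℂ] g)
    (hP0 : ∀ u : g, ⁅x, u⁆ = 0 → P u = 0)
    (hP1 : LinearMap.range P ≤ LinearMap.range (LieAlgebra.ad ℂ g x))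
    (hP2 : ∀ u : g, ⁅x, u - ⁅y, P u⁆⁆ = 0)
    (Γ : g → g → g)
    (hΓ : ∀ h v : g, Γ h v = ∑ k ∈ Finset.range (Module.finrank ℂ g + 1),
      ((-1 : ℂ) ^ k) • (((P ∘ₗ LieAlgebra.ad ℂ g h : Module.End ℂ g) ^ k) v))
    (h : g) (hh : ⁅x, h⁆ = 0)
    (ξ' η' : g) (hξ' : ⁅x, ξ'⁆ = 0) (hη' : ⁅x, η'⁆ = 0)
    (ξ'' η'' : g) (hξ'' : ⁅y, ξ''⁆ = 0) (hη'' : ⁅y, η''⁆ = 0) :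
    killingForm ℂ g ξ' (Γ h η'') - killingForm ℂ g (Γ h ξ'') η' =
      killingForm ℂ g ξ' η'' - killingForm ℂ g ξ'' η' :=
  gamma_preserves_canonical_symplectic_form_general x P hP1 Γ hΓ h ξ' η' hξ' hη' ξ'' η''
end

section
/- Let U and V be vector spaces over ℂ, let d, T : V → U be linear maps, let π : U → U be a linear projection (π ∘ π = π) with range(π) = range(d), and let P : U → V be a linear map with d(P(π(u))) = π(u) for all u ∈ U. Set N = P ∘ π ∘ T : V → V. Then: (a) the map 1 + N carries ker(d + T) into ker(d); (b) if moreover 1 + N is bijective and T((1 + N)⁻¹(w)) ∈ range(d) for every w ∈ ker(d), then 1 + N restricts to a linear bijection from ker(d + T) onto ker(d). -/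
/-- Let `U`, `V` be `ℂ`-vector spaces, `d T : V → U` linear,
`π : U → U` a projection with `range π = range d`, and `P : U → V` with
`d (P (π u)) = π u` for all `u`. Set `N = P ∘ π ∘ T`. Then: (a) `1 + N` carries
`ker (d + T)` into `ker d`; (b) if `1 + N` is bijective and `T ((1+N)⁻¹ w) ∈ range d`
for every `w ∈ ker d` (phrased: whenever `v + N v = w` and `d w = 0`, `T v ∈ range d`),
then `1 + N` restricts to a (linear) bijection from `ker (d + T)` onto `ker d`. -/
theorem one_add_N_maps_kernels
    {U V : Type*} [AddCommGroup U] [Module ℂ U] [AddCommGroup V] [Module ℂ V]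
    (d T : V →ₗ[ℂ] U) (π : U →ₗ[ℂ] U)
    (hππ : π ∘ₗ π = π) (hπr : LinearMap.range π = LinearMap.range d)
    (P : U →ₗ[ℂ] V) (hP : ∀ u : U, d (P (π u)) = π u) :
    (∀ v : V, d v + T v = 0 → d (v + P (π (T v))) = 0) ∧
    (Function.Bijective (fun v : V => v + P (π (T v))) →
      (∀ v w : V, v + P (π (T v)) = w → d w = 0 → T v ∈ LinearMap.range d) →
      Set.BijOn (fun v : V => v + P (π (T v)))
        {v : V | d v + T v = 0} {w : V | d w = 0}) := by
  -- π is the identity on range d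
  have hfix : ∀ u : U, u ∈ LinearMap.range d → π u = u := by
    intro u hu
    rw [← hπr] at hu
    obtain ⟨x, hx⟩ := hu
    rw [← hx, ← LinearMap.comp_apply, hππ]
  have key : ∀ v : V, d (v + P (π (T v))) = d v + π (T v) := by
    intro v
    rw [map_add, hP]
  have parta : ∀ v : V, d v + T v = 0 → d (v + P (π (T v))) = 0 := by
    intro v hv
    have hTv : T v ∈ LinearMap.range d := ⟨-v, by rw [map_neg, neg_eq_iff_add_eq_zero, add_comm]; exact (add_comm (T v) (d v)).trans hv⟩
    rw [key, hfix _ hTv, hv]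
  refine ⟨parta, fun hbij hrng => ?_⟩
  refine ⟨fun v hv => parta v hv, fun v _ v' _ h => hbij.1 h, fun w hw => ?_⟩
  obtain ⟨v, hv⟩ := hbij.2 w
  have hTv : T v ∈ LinearMap.range d := hrng v w hv hw
  refine ⟨v, ?_, hv⟩
  simp only at hv
  have := key v
  rw [hv, hfix _ hTv] at this
  simpa [Set.mem_setOf_eq, ← this] using hw
end

section
/- Let U and V be finite-dimensional vector spaces over ℂ, let d, T : V → U be linear maps, let π : U → U be a linear projection with range(π) = range(d), and let P : U → V be a linear map with d(P(π(u))) = π(u) for all u ∈ U. Set N = P ∘ π ∘ T and assume 1 + N is bijective. Then dim ker(d + T) = dim ker(d) if and only if T((1 + N)⁻¹(w)) ∈ range(d) for every w ∈ ker(d). -/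
/-- Let `U`, `V` be finite-dimensional `ℂ`-vector spaces,
`d T : V → U` linear, `π : U → U` a projection with `range π = range d`, and
`P : U → V` with `d (P (π u)) = π u` for all `u`. Set `N = P ∘ π ∘ T` and assume
`1 + N` is bijective. Then `dim ker (d + T) = dim ker d` if and only if
`T ((1+N)⁻¹ w) ∈ range d` for every `w ∈ ker d` (phrased: whenever `v + N v = w`
and `d w = 0`, `T v ∈ range d`). -/
theorem finrank_ker_eq_iff
    {U V : Type*} [AddCommGroup U] [Module ℂ U] [FiniteDimensional ℂ U]
    [AddCommGroup V] [Module ℂ V] [FiniteDimensional ℂ V]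
    (d T : V →ₗ[ℂ] U) (π : U →ₗ[ℂ] U)
    (hππ : π ∘ₗ π = π) (hπr : LinearMap.range π = LinearMap.range d)
    (P : U →ₗ[ℂ] V) (hP : ∀ u : U, d (P (π u)) = π u)
    (hbij : Function.Bijective (fun v : V => v + P (π (T v)))) :
    Module.finrank ℂ (LinearMap.ker (d + T)) = Module.finrank ℂ (LinearMap.ker d) ↔
      (∀ v w : V, v + P (π (T v)) = w → d w = 0 → T v ∈ LinearMap.range d) := by
  set L : V →ₗ[ℂ] V := LinearMap.id + P ∘ₗ π ∘ₗ T with hLdef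
  have hLapp : ∀ v : V, L v = v + P (π (T v)) := fun v => rfl
  have hbijL : Function.Bijective L := hbij
  -- π fixes elements of range d
  have hfix : ∀ u ∈ LinearMap.range d, π u = u := by
    intro u hu
    rw [← hπr] at hu
    obtain ⟨x, hx⟩ := hu
    rw [← hx, ← LinearMap.comp_apply, hππ]
  have hdL : ∀ v : V, d (L v) = d v + π (T v) := by
    intro v
    rw [hLapp]
    simp [hP (T v)]
  -- L maps ker (d + T) into ker d
  have hmap : ∀ v ∈ LinearMap.ker (d + T), L v ∈ LinearMap.ker d := by
    intro v hv
    have hv' : d v + T v = 0 := hv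
    have hTv : T v ∈ LinearMap.range d := ⟨-v, by rw [map_neg]; exact neg_eq_of_add_eq_zero_right hv'⟩
    rw [LinearMap.mem_ker, hdL, hfix (T v) hTv]
    exact hv'
  set f := LinearMap.restrict L hmap with hf
  have hfinj : Function.Injective f := by
    intro a b hab
    have : L a = L b := congrArg Subtype.val hab
    exact Subtype.ext (hbijL.1 this)
  constructor
  · intro hdim v w hvw hw
    have hfsurj : Function.Surjective f :=
      (LinearMap.injective_iff_surjective_of_finrank_eq_finrank hdim).mp hfinj
    obtain ⟨⟨v', hv'⟩, hfv'⟩ := hfsurj ⟨w, hw⟩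
    have hLv' : L v' = w := congrArg Subtype.val hfv'
    have hveq : v' = v := hbijL.1 (by rw [hLv', hLapp, hvw])
    rw [← hveq]
    have hv'' : d v' + T v' = 0 := hv'
    exact ⟨-v', by rw [map_neg]; exact neg_eq_of_add_eq_zero_right hv''⟩
  · intro hcond
    have hfsurj : Function.Surjective f := by
      rintro ⟨w, hw⟩
      obtain ⟨v, hv⟩ := hbijL.2 w
      have hLv : L v = w := hv
      have hTv : T v ∈ LinearMap.range d := hcond v w (by rw [← hLapp]; exact hLv) hw
      have hvker : v ∈ LinearMap.ker (d + T) := by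
        have := hdL v
        rw [hLv, hw, hfix (T v) hTv] at this
        exact this.symm
      exact ⟨⟨v, hvker⟩, Subtype.ext hLv⟩
    exact LinearEquiv.finrank_eq (LinearEquiv.ofBijective f ⟨hfinj, hfsurj⟩)
end
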